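/- arXiv:2105.13260 — 5 statements merged into one kernel-verified Lean document; each statement's English description precedes it below -/
import Mathlib

section
/- Fix a < z₀ < b. Then as ρ → 0⁺, G_{a<z<b}(ρ, z₀) − 2 log ρ converges to −log(4(b − z₀)(z₀ − a)). In particular G_{a<z<b}(ρ, z₀) = 2 log ρ + O(1) as ρ → 0. -/
open Real Filter Set Topology

/-- For `a < z₀ < b`, as `ρ → 0⁺`,
`G_{a<z<b}(ρ, z₀) − 2 log ρ → −log(4(b − z₀)(z₀ − a))`;
in particular `G_{a<z<b}(ρ, z₀) = 2 log ρ + O(1)`. -/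
theorem greens_function_interior_asymptotics (a b z₀ : ℝ) (h₁ : a < z₀) (h₂ : z₀ < b) :
    Tendsto (fun ρ : ℝ =>
        Real.log ((Real.sqrt (ρ ^ 2 + (z₀ - b) ^ 2) + (z₀ - b)) /
            (Real.sqrt (ρ ^ 2 + (z₀ - a) ^ 2) + (z₀ - a))) - 2 * Real.log ρ)
      (nhdsWithin 0 (Ioi 0))
      (nhds (-Real.log (4 * (b - z₀) * (z₀ - a)))) := by
  have hc : (0:ℝ) < b - z₀ := by linarith
  have hd : (0:ℝ) < z₀ - a := by linarith
  have hEq : ∀ ρ ∈ Ioi (0:ℝ),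
      Real.log ((Real.sqrt (ρ ^ 2 + (z₀ - b) ^ 2) + (z₀ - b)) /
          (Real.sqrt (ρ ^ 2 + (z₀ - a) ^ 2) + (z₀ - a))) - 2 * Real.log ρ
        = -Real.log ((Real.sqrt (ρ ^ 2 + (z₀ - b) ^ 2) + (b - z₀)) *
            (Real.sqrt (ρ ^ 2 + (z₀ - a) ^ 2) + (z₀ - a))) := by
    intro ρ hρ
    have hρ0 : (0:ℝ) < ρ := hρ
    set s := Real.sqrt (ρ ^ 2 + (z₀ - b) ^ 2) with hs
    set t := Real.sqrt (ρ ^ 2 + (z₀ - a) ^ 2) with ht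
    have hs0 : 0 ≤ s := Real.sqrt_nonneg _
    have ht0 : 0 ≤ t := Real.sqrt_nonneg _
    have hssq : s ^ 2 = ρ ^ 2 + (z₀ - b) ^ 2 := Real.sq_sqrt (by positivity)
    have hsc : b - z₀ < s := by nlinarith
    have htd : 0 < t + (z₀ - a) := by
      have : z₀ - a ≤ t := by
        rw [ht]
        nlinarith [Real.sq_sqrt (show (0:ℝ) ≤ ρ ^ 2 + (z₀ - a) ^ 2 from by positivity),
          Real.sqrt_nonneg (ρ ^ 2 + (z₀ - a) ^ 2)]
      linarith
    have hN : s + (z₀ - b) = ρ ^ 2 / (s + (b - z₀)) := by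
      have hsc' : 0 < s + (b - z₀) := by linarith
      field_simp
      nlinarith
    have hNpos : 0 < s + (z₀ - b) := by
      rw [hN]
      have : (0:ℝ) < s + (b - z₀) := by linarith
      positivity
    rw [Real.log_div (ne_of_gt hNpos) (ne_of_gt htd), hN,
      Real.log_div (by positivity) (by linarith),
      Real.log_pow, Real.log_mul (by linarith) (ne_of_gt htd)]
    push_cast
    ring
  have hlim : Tendsto (fun ρ : ℝ =>
      -Real.log ((Real.sqrt (ρ ^ 2 + (z₀ - b) ^ 2) + (b - z₀)) *
        (Real.sqrt (ρ ^ 2 + (z₀ - a) ^ 2) + (z₀ - a))))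
      (nhdsWithin 0 (Ioi 0)) (nhds (-Real.log (4 * (b - z₀) * (z₀ - a)))) := by
    have hcont : ContinuousAt (fun ρ : ℝ =>
        -Real.log ((Real.sqrt (ρ ^ 2 + (z₀ - b) ^ 2) + (b - z₀)) *
          (Real.sqrt (ρ ^ 2 + (z₀ - a) ^ 2) + (z₀ - a)))) 0 := by
      have h1 : Real.sqrt ((0:ℝ) ^ 2 + (z₀ - b) ^ 2) = b - z₀ := by
        rw [show (0:ℝ) ^ 2 + (z₀ - b) ^ 2 = (b - z₀) ^ 2 from by ring, Real.sqrt_sq hc.le]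
      have h2 : Real.sqrt ((0:ℝ) ^ 2 + (z₀ - a) ^ 2) = z₀ - a := by
        rw [show (0:ℝ) ^ 2 + (z₀ - a) ^ 2 = (z₀ - a) ^ 2 from by ring, Real.sqrt_sq hd.le]
      apply ContinuousAt.neg
      apply Real.continuousAt_log ?_ |>.comp
      · fun_prop
      · rw [h1, h2]; positivity
    have h1 : Real.sqrt ((0:ℝ) ^ 2 + (z₀ - b) ^ 2) = b - z₀ := by
      rw [show (0:ℝ) ^ 2 + (z₀ - b) ^ 2 = (b - z₀) ^ 2 from by ring, Real.sqrt_sq hc.le]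
    have h2 : Real.sqrt ((0:ℝ) ^ 2 + (z₀ - a) ^ 2) = z₀ - a := by
      rw [show (0:ℝ) ^ 2 + (z₀ - a) ^ 2 = (z₀ - a) ^ 2 from by ring, Real.sqrt_sq hd.le]
    have hcw := hcont.continuousWithinAt (s := Ioi (0:ℝ))
    unfold ContinuousWithinAt at hcw
    beta_reduce at hcw
    rw [h1, h2, show (b - z₀ + (b - z₀)) * (z₀ - a + (z₀ - a)) = 4 * (b - z₀) * (z₀ - a)
      from by ring] at hcw
    exact hcw
  refine Tendsto.congr' ?_ hlim
  filter_upwards [self_mem_nhdsWithin] with ρ hρ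
  exact (hEq ρ hρ).symm
end

section
/- Fix a < b. Then r · G_{a<z<b} → a − b as r → ∞, uniformly in the polar angle; that is, writing ρ = r sin θ, z = r cos θ with θ ∈ (0,π), the function r · log[(√(ρ²+(z-b)²)+(z-b))/(√(ρ²+(z-a)²)+(z-a))] tends to a − b as r → ∞. Consequently G_{a<z<b} = (a-b)/r + O(r⁻²) at infinity. -/
/-!
With `g w = log (√(ρ² + w²) + w)` one has `g' w = 1 / √(ρ² + w²)`, so by the mean value theorem
`G_{a<z<b}(ρ, z) = (a - b) / s`, where `s` is the distance from `(ρ, z)` to some point `(0, ξ)`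
with `a < ξ < b`. By the triangle inequality `|r - s| ≤ |ξ| ≤ M := max |a| |b|`, hence
`|r G - (a - b)| = (b - a) |r - s| / s ≤ (b - a) M / (r - M)`, a bound independent of `θ`.
-/

open Real Filter Set Topology

noncomputable def finiteIntervalGreen (a b ρ z : ℝ) : ℝ :=
  log ((√(ρ ^ 2 + (z - b) ^ 2) + (z - b)) / (√(ρ ^ 2 + (z - a) ^ 2) + (z - a)))

lemma sqrt_sq_add_sq_add_pos {ρ : ℝ} (hρ : ρ ≠ 0) (w : ℝ) : 0 < √(ρ ^ 2 + w ^ 2) + w := by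
  have : |w| < √(ρ ^ 2 + w ^ 2) := by
    rw [← sqrt_sq_eq_abs]
    exact sqrt_lt_sqrt (sq_nonneg w) (by linarith [sq_pos_of_ne_zero hρ])
  linarith [neg_abs_le w]

lemma hasDerivAt_log_sqrt_sq_add_sq_add {ρ : ℝ} (hρ : ρ ≠ 0) (w : ℝ) :
    HasDerivAt (fun w => log (√(ρ ^ 2 + w ^ 2) + w)) (1 / √(ρ ^ 2 + w ^ 2)) w := by
  have hpos : 0 < ρ ^ 2 + w ^ 2 := by positivity
  have hsum := (((hasDerivAt_pow 2 w).const_add (ρ ^ 2)).sqrt hpos.ne').add (hasDerivAt_id' w)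
  convert hsum.log (sqrt_sq_add_sq_add_pos hρ w).ne' using 1
  · rfl
  have hs : √(ρ ^ 2 + w ^ 2) ≠ 0 := (sqrt_pos.mpr hpos).ne'
  have hsw := (sqrt_sq_add_sq_add_pos hρ w).ne'
  simp only [Pi.add_apply]
  field_simp
  ring

lemma exists_finiteIntervalGreen_eq_div_sqrt {a b ρ : ℝ} (hab : a < b) (hρ : ρ ≠ 0) (z : ℝ) :
    ∃ ξ ∈ Ioo a b, finiteIntervalGreen a b ρ z = (a - b) / √(ρ ^ 2 + (z - ξ) ^ 2) := by
  obtain ⟨η, hη, hslope⟩ := exists_hasDerivAt_eq_slope (fun w => log (√(ρ ^ 2 + w ^ 2) + w))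
    (fun w => 1 / √(ρ ^ 2 + w ^ 2)) (by linarith : z - b < z - a)
    (fun w _ => (hasDerivAt_log_sqrt_sq_add_sq_add hρ w).continuousAt.continuousWithinAt)
    (fun w _ => hasDerivAt_log_sqrt_sq_add_sq_add hρ w)
  refine ⟨z - η, ⟨by linarith [hη.2], by linarith [hη.1]⟩, ?_⟩
  rw [finiteIntervalGreen, log_div (sqrt_sq_add_sq_add_pos hρ _).ne'
    (sqrt_sq_add_sq_add_pos hρ _).ne', sub_sub_cancel, ← neg_sub]
  rw [eq_div_iff (by linarith)] at hslope
  rw [← hslope]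
  ring

lemma abs_sqrt_sq_add_sq_sub_sqrt_sq_add_sq_le (x y w : ℝ) :
    |√(x ^ 2 + y ^ 2) - √(x ^ 2 + w ^ 2)| ≤ |y - w| := by
  simpa [← Complex.norm_add_mul_I, ← sub_mul, ← Complex.ofReal_sub] using
    abs_norm_sub_norm_le ((x : ℂ) + y * Complex.I) (x + w * Complex.I)

lemma abs_mul_finiteIntervalGreen_sub_le {a b ρ z : ℝ} (hab : a < b) (hρ : ρ ≠ 0)
    (hM : max |a| |b| < √(ρ ^ 2 + z ^ 2)) :
    |√(ρ ^ 2 + z ^ 2) * finiteIntervalGreen a b ρ z - (a - b)| ≤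
      (b - a) * max |a| |b| / (√(ρ ^ 2 + z ^ 2) - max |a| |b|) := by
  set r := √(ρ ^ 2 + z ^ 2)
  set M := max |a| |b|
  obtain ⟨ξ, hξ, hG⟩ := exists_finiteIntervalGreen_eq_div_sqrt hab hρ z
  set s := √(ρ ^ 2 + (z - ξ) ^ 2)
  have hξM : |ξ| ≤ M := abs_le_max_abs_abs hξ.1.le hξ.2.le
  have hrs : |r - s| ≤ M := by
    have h := abs_sqrt_sq_add_sq_sub_sqrt_sq_add_sq_le ρ z (z - ξ)
    rw [sub_sub_cancel] at h
    exact h.trans hξM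
  have hs : r - M ≤ s := by linarith [abs_le.1 hrs]
  have hrM : 0 < r - M := by linarith
  have hs0 : s ≠ 0 := (hrM.trans_le hs).ne'
  calc |r * finiteIntervalGreen a b ρ z - (a - b)| = (b - a) * |r - s| / s := by
        rw [hG, show r * ((a - b) / s) - (a - b) = (a - b) * (r - s) / s by field_simp,
          abs_div, abs_mul, abs_of_neg (by linarith : a - b < 0), abs_of_pos (by linarith : 0 < s),
          neg_sub]
    _ ≤ (b - a) * M / (r - M) := by gcongr

/-- For `a < b`, writing `ρ = r sin θ`, `z = r cos θ` with `θ ∈ (0,π)`,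
`r · G_{a<z<b} → a − b` as `r → ∞`, uniformly in `θ`. -/
theorem greens_function_decay_at_infinity (a b : ℝ) (hab : a < b) :
    ∀ ε : ℝ, 0 < ε → ∃ R : ℝ, ∀ r : ℝ, R ≤ r → ∀ θ : ℝ, θ ∈ Ioo 0 π →
      |r * Real.log
          ((Real.sqrt ((r * Real.sin θ) ^ 2 + (r * Real.cos θ - b) ^ 2) +
              (r * Real.cos θ - b)) /
            (Real.sqrt ((r * Real.sin θ) ^ 2 + (r * Real.cos θ - a) ^ 2) +
              (r * Real.cos θ - a))) - (a - b)| < ε := by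
  intro ε hε
  set M := max |a| |b|
  have hbound : Tendsto (fun r => (b - a) * M / (r - M)) atTop (𝓝 0) :=
    tendsto_const_nhds.div_atTop (tendsto_atTop_add_const_right _ _ tendsto_id)
  obtain ⟨R, hR⟩ := eventually_atTop.1
    ((hbound.eventually (gt_mem_nhds hε)).and (eventually_gt_atTop M))
  refine ⟨R, fun r hr θ hθ => ?_⟩
  have hrpos : 0 < r := (le_max_of_le_left (abs_nonneg a)).trans_lt (hR r hr).2
  have hρ : r * sin θ ≠ 0 := (mul_pos hrpos (sin_pos_of_pos_of_lt_pi hθ.1 hθ.2)).ne'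
  have hr_eq : √((r * sin θ) ^ 2 + (r * cos θ) ^ 2) = r := by
    rw [mul_pow, mul_pow, ← mul_add, sin_sq_add_cos_sq, mul_one, sqrt_sq hrpos.le]
  have hG := abs_mul_finiteIntervalGreen_sub_le hab hρ (hr_eq.symm ▸ (hR r hr).2)
  rw [hr_eq] at hG
  exact hG.trans_lt (hR r hr).1
end

section
/- Fix m₁, m₂ > 0. Then the opposite-sign force F(ℓ) = −m₁m₂/((ℓ + 2m₁)(ℓ + 2m₂)) satisfies lim_{ℓ→0⁺} F(ℓ) = −m₁m₂/(4m₁m₂) = −1/4, independently of the magnitudes m₁ and m₂. Moreover −1/4 < F(ℓ) < 0 for all ℓ > 0. -/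
open Filter Set Topology

/-- The opposite-sign force `F(ℓ) = −m₁m₂/((ℓ+2m₁)(ℓ+2m₂))` tends to `−1/4` as
`ℓ → 0⁺`, independently of the magnitudes, and `−1/4 < F(ℓ) < 0` for all `ℓ > 0`. -/
theorem opposite_sign_force_touching_limit (m₁ m₂ : ℝ) (hm₁ : 0 < m₁) (hm₂ : 0 < m₂) :
    Tendsto (fun ℓ : ℝ => -(m₁ * m₂) / ((ℓ + 2 * m₁) * (ℓ + 2 * m₂)))
      (nhdsWithin 0 (Ioi 0)) (nhds (-1 / 4)) ∧
    ∀ ℓ : ℝ, 0 < ℓ →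
      -1 / 4 < -(m₁ * m₂) / ((ℓ + 2 * m₁) * (ℓ + 2 * m₂)) ∧
      -(m₁ * m₂) / ((ℓ + 2 * m₁) * (ℓ + 2 * m₂)) < 0 := by
  constructor
  · have hden : ((0:ℝ) + 2 * m₁) * (0 + 2 * m₂) ≠ 0 := by positivity
    have hc : ContinuousAt (fun ℓ : ℝ => -(m₁ * m₂) / ((ℓ + 2 * m₁) * (ℓ + 2 * m₂))) 0 := by
      apply ContinuousAt.div
      · fun_prop
      · fun_prop
      · exact hden
    have := hc.tendsto.mono_left (nhdsWithin_le_nhds (s := Ioi (0:ℝ)))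
    convert this using 2
    field_simp
    ring
  · intro ℓ hℓ
    have h1 : 0 < ℓ + 2 * m₁ := by linarith
    have h2 : 0 < ℓ + 2 * m₂ := by linarith
    constructor
    · rw [div_lt_div_iff₀ (by norm_num) (by positivity), neg_mul, neg_mul, neg_lt_neg_iff]
      nlinarith [mul_pos hℓ hℓ, mul_pos hℓ hm₁, mul_pos hℓ hm₂]
    · apply div_neg_of_neg_of_pos
      · nlinarith
      · positivity
end

section
/- For μ₁ > 0 and μ₂ = 2μ₁, the quantity f(μ₁, 2μ₁) = log[(1 + 4μ₁)(1 + 2μ₁)²(1 + 4μ₁)/((1 + 6μ₁)(1 + 3μ₁)²)] is strictly positive; i.e. (1 + 4μ₁)²(1 + 2μ₁)² > (1 + 6μ₁)(1 + 3μ₁)² for all μ₁ > 0. -/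
open Real

/-- Positivity of the middle-rod angle defect on the zero total mass line
`μ₂ = 2μ₁`: `(1+4μ₁)²(1+2μ₁)² > (1+6μ₁)(1+3μ₁)²`, hence `f(μ₁, 2μ₁) > 0`. -/
theorem angle_defect_positive_on_zero_mass_line (μ₁ : ℝ) (h : 0 < μ₁) :
    (1 + 6 * μ₁) * (1 + 3 * μ₁) ^ 2 < (1 + 4 * μ₁) ^ 2 * (1 + 2 * μ₁) ^ 2 ∧
    0 < Real.log ((1 + 4 * μ₁) * (1 + 2 * μ₁) ^ 2 * (1 + 4 * μ₁) /
      ((1 + 6 * μ₁) * (1 + 3 * μ₁) ^ 2)) := by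
  have hlt : (1 + 6 * μ₁) * (1 + 3 * μ₁) ^ 2 < (1 + 4 * μ₁) ^ 2 * (1 + 2 * μ₁) ^ 2 := by
    nlinarith [sq_nonneg μ₁, pow_pos h 3, pow_pos h 4]
  have hden : 0 < (1 + 6 * μ₁) * (1 + 3 * μ₁) ^ 2 := by positivity
  refine ⟨hlt, Real.log_pos ?_⟩
  rw [lt_div_iff₀ hden]
  nlinarith [hlt]
end

section
/- For all positive real numbers ℓ₂, ℓ₃, a, b, one has (ℓ₂ + ℓ₃ + 2a)²(ℓ₂ + ℓ₃ + 2b)² > ℓ₂(ℓ₂ + ℓ₃)(ℓ₂ + 2a)(ℓ₂ + ℓ₃ + 2a + 2b); consequently the quantity (1/2)log[(ℓ₂+ℓ₃+2a)²(ℓ₂+ℓ₃+2b)²/(ℓ₂(ℓ₂+ℓ₃)(ℓ₂+2a)(ℓ₂+ℓ₃+2a+2b))] is strictly positive. -/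
open Real

lemma like_type_key (ℓ₂ ℓ₃ a b : ℝ)
    (h₂ : 0 < ℓ₂) (h₃ : 0 < ℓ₃) (ha : 0 < a) (hb : 0 < b) :
    ℓ₂ * (ℓ₂ + ℓ₃) * (ℓ₂ + 2 * a) * (ℓ₂ + ℓ₃ + 2 * a + 2 * b) <
      (ℓ₂ + ℓ₃ + 2 * a) ^ 2 * (ℓ₂ + ℓ₃ + 2 * b) ^ 2 := by
  obtain ⟨s, hs, hsp⟩ : ∃ s, s = ℓ₂ + ℓ₃ ∧ 0 < s := ⟨ℓ₂ + ℓ₃, rfl, by linarith⟩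
  have h1 : ℓ₂ * (ℓ₂ + ℓ₃) * (ℓ₂ + 2 * a) * (ℓ₂ + ℓ₃ + 2 * a + 2 * b) ≤
      s * s * (s + 2 * a) * (s + 2 * a + 2 * b) := by
    subst hs
    gcongr <;> linarith
  have h2 : s * s * (s + 2 * a) * (s + 2 * a + 2 * b) < (s + 2 * a) ^ 2 * (s + 2 * b) ^ 2 := by
    nlinarith [mul_pos (mul_pos hsp hsp) hb, mul_pos (mul_pos hsp hb) hb,
      mul_pos (mul_pos hsp ha) hb, mul_pos (mul_pos ha hb) hb,
      mul_pos (mul_pos ha ha) hb, mul_pos hsp ha]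
  calc ℓ₂ * (ℓ₂ + ℓ₃) * (ℓ₂ + 2 * a) * (ℓ₂ + ℓ₃ + 2 * a + 2 * b)
      ≤ s * s * (s + 2 * a) * (s + 2 * a + 2 * b) := h1
    _ < (s + 2 * a) ^ 2 * (s + 2 * b) ^ 2 := h2
    _ = (ℓ₂ + ℓ₃ + 2 * a) ^ 2 * (ℓ₂ + ℓ₃ + 2 * b) ^ 2 := by rw [hs]

/-- The like-type 5D two-body angle defect is strictly positive, so two spherical
horizons (or two spherical NMSs) can never be balanced. -/
theorem like_type_two_body_never_balanced (ℓ₂ ℓ₃ a b : ℝ)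
    (h₂ : 0 < ℓ₂) (h₃ : 0 < ℓ₃) (ha : 0 < a) (hb : 0 < b) :
    ℓ₂ * (ℓ₂ + ℓ₃) * (ℓ₂ + 2 * a) * (ℓ₂ + ℓ₃ + 2 * a + 2 * b) <
      (ℓ₂ + ℓ₃ + 2 * a) ^ 2 * (ℓ₂ + ℓ₃ + 2 * b) ^ 2 ∧
    0 < (1 / 2) * Real.log ((ℓ₂ + ℓ₃ + 2 * a) ^ 2 * (ℓ₂ + ℓ₃ + 2 * b) ^ 2 /
      (ℓ₂ * (ℓ₂ + ℓ₃) * (ℓ₂ + 2 * a) * (ℓ₂ + ℓ₃ + 2 * a + 2 * b))) := by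
  have key := like_type_key ℓ₂ ℓ₃ a b h₂ h₃ ha hb
  have hpos : 0 < ℓ₂ * (ℓ₂ + ℓ₃) * (ℓ₂ + 2 * a) * (ℓ₂ + ℓ₃ + 2 * a + 2 * b) := by positivity
  refine ⟨key, ?_⟩
  have h1 : 1 < (ℓ₂ + ℓ₃ + 2 * a) ^ 2 * (ℓ₂ + ℓ₃ + 2 * b) ^ 2 /
      (ℓ₂ * (ℓ₂ + ℓ₃) * (ℓ₂ + 2 * a) * (ℓ₂ + ℓ₃ + 2 * a + 2 * b)) :=
    (one_lt_div hpos).mpr key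
  have := Real.log_pos h1
  linarith
end
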